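/- arXiv:1903.11873 — 2 statements merged into one kernel-verified Lean document; each statement's English description precedes it below -/
import Mathlib

section
/- For an additive PC matrix Ĉ (ĉ_{ij} = −ĉ_{ji}), with Δ_i = (1/n)Σ_j ĉ_{ij}, x_{ij} = Δ_i − Δ_j, and e_{ij} = ĉ_{ij} − x_{ij}, the matrices X = [x_{ij}] and E = [e_{ij}] are both antisymmetric, and Σ_{i,j} ĉ_{ij}² = Σ_{i,j} x_{ij}² + Σ_{i,j} e_{ij}² (orthogonal decomposition); hence Barzilai's relative error RE = Σ e_{ij}²/Σ ĉ_{ij}² lies in [0, 1]. -/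
/-- For an additive (antisymmetric) PC matrix, the matrices `X`
and `E` of Barzilai's construction are antisymmetric, the squared norms
decompose orthogonally, and the relative error lies in `[0, 1]`. -/
theorem barzilai_relative_error_bounds {n : ℕ} (A : Fin n → Fin n → ℝ)
    (hA : ∀ i j, A i j = -A j i) (hne : ∃ i j, A i j ≠ 0) :
    let Δ : Fin n → ℝ := fun i => (1 / (n : ℝ)) * ∑ j, A i j
    let X : Fin n → Fin n → ℝ := fun i j => Δ i - Δ j
    let E : Fin n → Fin n → ℝ := fun i j => A i j - X i j
    (∀ i j, X i j = -X j i) ∧ (∀ i j, E i j = -E j i) ∧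
    (∑ i, ∑ j, (A i j) ^ 2 = ∑ i, ∑ j, (X i j) ^ 2 + ∑ i, ∑ j, (E i j) ^ 2) ∧
    0 ≤ (∑ i, ∑ j, (E i j) ^ 2) / (∑ i, ∑ j, (A i j) ^ 2) ∧
    (∑ i, ∑ j, (E i j) ^ 2) / (∑ i, ∑ j, (A i j) ^ 2) ≤ 1 := by
  intro Δ X E
  obtain ⟨i₀, j₀, hne0⟩ := hne
  have hn : (n : ℝ) ≠ 0 := by
    have : 0 < n := Fin.pos i₀
    exact_mod_cast this.ne'
  -- row sums
  have hrow : ∀ i, ∑ j, A i j = (n : ℝ) * Δ i := by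
    intro i
    simp only [Δ]
    field_simp
  have hcol : ∀ j, ∑ i, A i j = -((n : ℝ) * Δ j) := by
    intro j
    have : ∑ i, A i j = -∑ i, A j i := by
      rw [← Finset.sum_neg_distrib]
      exact Finset.sum_congr rfl fun i _ => hA i j
    rw [this, hrow]
  have hΔ0 : ∑ i, Δ i = 0 := by
    have h1 : (n : ℝ) * ∑ i, Δ i = ∑ i, ∑ j, A i j := by
      rw [Finset.mul_sum]
      exact Finset.sum_congr rfl fun i _ => (hrow i).symm
    have h2 : ∑ i, ∑ j, A i j = -∑ i, ∑ j, A i j := by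
      nth_rewrite 1 [Finset.sum_comm]
      rw [← Finset.sum_neg_distrib]
      refine Finset.sum_congr rfl fun i _ => ?_
      rw [← Finset.sum_neg_distrib]
      exact Finset.sum_congr rfl fun j _ => hA j i
    have h3 : ∑ i, ∑ j, A i j = 0 := by linarith
    have := h1.trans h3
    exact (mul_eq_zero.mp this).resolve_left hn
  set S := ∑ i, (Δ i) ^ 2 with hS
  -- ∑∑ X*A = 2 n S
  have hXA : ∑ i, ∑ j, X i j * A i j = 2 * n * S := by
    have : ∀ i, ∑ j, X i j * A i j = Δ i * ((n:ℝ) * Δ i) - ∑ j, Δ j * A i j := by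
      intro i
      simp only [X, sub_mul, Finset.sum_sub_distrib, ← Finset.mul_sum, hrow i]
    rw [Finset.sum_congr rfl fun i _ => this i, Finset.sum_sub_distrib]
    have h4 : ∑ i, ∑ j, Δ j * A i j = -((n:ℝ) * S) := by
      rw [Finset.sum_comm]
      have : ∀ j, ∑ i, Δ j * A i j = Δ j * -((n:ℝ) * Δ j) := by
        intro j; rw [← Finset.mul_sum, hcol j]
      rw [Finset.sum_congr rfl fun j _ => this j, hS, Finset.mul_sum, ← Finset.sum_neg_distrib]
      exact Finset.sum_congr rfl fun j _ => by ring
    rw [h4]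
    have h5 : ∑ i, Δ i * ((n:ℝ) * Δ i) = (n:ℝ) * S := by
      rw [hS, Finset.mul_sum]; exact Finset.sum_congr rfl fun i _ => by ring
    rw [h5]; ring
  -- ∑∑ X² = 2 n S
  have hXX : ∑ i, ∑ j, (X i j) ^ 2 = 2 * n * S := by
    have : ∀ i, ∑ j, (X i j) ^ 2 =
        (n : ℝ) * (Δ i) ^ 2 - 2 * Δ i * (∑ j, Δ j) + S := by
      intro i
      have : ∀ j, (X i j) ^ 2 = (Δ i)^2 - 2 * Δ i * Δ j + (Δ j)^2 := fun j => by
        simp only [X]; ring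
      rw [Finset.sum_congr rfl fun j _ => this j]
      rw [Finset.sum_add_distrib, Finset.sum_sub_distrib, ← Finset.mul_sum]
      simp [hS, Finset.card_univ, mul_comm]
    rw [Finset.sum_congr rfl fun i _ => this i, hΔ0]
    simp only [mul_zero, sub_zero]
    rw [Finset.sum_add_distrib, ← Finset.mul_sum, ← hS]
    simp [Finset.card_univ]
    ring
  -- orthogonal decomposition
  have hdecomp : ∑ i, ∑ j, (A i j) ^ 2 = ∑ i, ∑ j, (X i j) ^ 2 + ∑ i, ∑ j, (E i j) ^ 2 := by
    have expand : ∀ i j, (A i j)^2 = (X i j)^2 + (E i j)^2 + 2 * (X i j * A i j) - 2 * (X i j)^2 := by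
      intro i j; simp only [E]; ring
    calc ∑ i, ∑ j, (A i j) ^ 2
        = ∑ i, ∑ j, ((X i j)^2 + (E i j)^2 + 2 * (X i j * A i j) - 2 * (X i j)^2) := by
          exact Finset.sum_congr rfl fun i _ => Finset.sum_congr rfl fun j _ => expand i j
      _ = (∑ i, ∑ j, (X i j)^2) + (∑ i, ∑ j, (E i j)^2)
            + 2 * (∑ i, ∑ j, X i j * A i j) - 2 * (∑ i, ∑ j, (X i j)^2) := by
          simp only [Finset.sum_add_distrib, Finset.sum_sub_distrib, ← Finset.mul_sum]
      _ = _ := by rw [hXA, hXX]; ring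
  have hApos : 0 < ∑ i, ∑ j, (A i j) ^ 2 := by
    have h1 : 0 < ∑ j, (A i₀ j) ^ 2 :=
      Finset.sum_pos' (fun j _ => sq_nonneg _) ⟨j₀, Finset.mem_univ _, by positivity⟩
    exact Finset.sum_pos' (fun i _ => Finset.sum_nonneg fun j _ => sq_nonneg _)
      ⟨i₀, Finset.mem_univ _, h1⟩
  have hEnn : 0 ≤ ∑ i, ∑ j, (E i j) ^ 2 :=
    Finset.sum_nonneg fun i _ => Finset.sum_nonneg fun j _ => sq_nonneg _
  have hXnn : 0 ≤ ∑ i, ∑ j, (X i j) ^ 2 :=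
    Finset.sum_nonneg fun i _ => Finset.sum_nonneg fun j _ => sq_nonneg _
  refine ⟨fun i j => by simp only [X]; ring,
    fun i j => by simp only [E, X]; rw [hA i j]; ring, hdecomp,
    div_nonneg hEnn hApos.le, ?_⟩
  rw [div_le_one hApos]
  linarith
end

section
/- Barzilai's relative error RE(Ĉ) = 0 if and only if the additive PC matrix Ĉ is additively consistent, i.e., ĉ_{ik} + ĉ_{kj} = ĉ_{ij} for all i, j, k. -/
/-- Barzilai's relative error vanishes iff the additive PC matrix
is additively consistent. -/
theorem barzilai_relative_error_zero_iff {n : ℕ} (A : Fin n → Fin n → ℝ)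
    (hA : ∀ i j, A i j = -A j i) (hne : ∃ i j, A i j ≠ 0) :
    let Δ : Fin n → ℝ := fun i => (1 / (n : ℝ)) * ∑ j, A i j
    let E : Fin n → Fin n → ℝ := fun i j => A i j - (Δ i - Δ j)
    ((∑ i, ∑ j, (E i j) ^ 2) / (∑ i, ∑ j, (A i j) ^ 2) = 0 ↔
      ∀ i j k : Fin n, A i k + A k j = A i j) := by
  intro Δ E
  obtain ⟨i0, j0, h0⟩ := hne
  have hn : (0:ℝ) < n := by exact_mod_cast i0.pos
  have hden : 0 < ∑ i, ∑ j, (A i j) ^ 2 := by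
    apply Finset.sum_pos' (fun i _ => Finset.sum_nonneg fun j _ => sq_nonneg _)
    exact ⟨i0, Finset.mem_univ _,
      Finset.sum_pos' (fun j _ => sq_nonneg _)
        ⟨j0, Finset.mem_univ _, by positivity⟩⟩
  rw [div_eq_zero_iff]
  constructor
  · rintro (hnum | hd)
    · have hE : ∀ i j, A i j = Δ i - Δ j := by
        intro i j
        have h1 := (Finset.sum_eq_zero_iff_of_nonneg
          (fun i _ => Finset.sum_nonneg fun j _ => sq_nonneg (E i j))).mp hnum
          i (Finset.mem_univ _)
        have h2 := (Finset.sum_eq_zero_iff_of_nonneg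
          (fun j _ => sq_nonneg (E i j))).mp h1 j (Finset.mem_univ _)
        have := pow_eq_zero_iff (n := 2) (by norm_num) |>.mp h2
        simpa [E, sub_eq_zero] using this
      intro i j k
      rw [hE i k, hE k j, hE i j]; ring
    · exact absurd hd hden.ne'
  · intro hcons
    left
    have hAeq : ∀ i j, A i j = Δ i - Δ j := by
      intro i j
      have hsum : ∑ k : Fin n, (A i k + A k j) = ∑ _k : Fin n, A i j :=
        Finset.sum_congr rfl fun k _ => hcons i j k
      have h1 : ∑ k : Fin n, A k j = -∑ k : Fin n, A j k := by
        rw [← Finset.sum_neg_distrib]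
        exact Finset.sum_congr rfl fun k _ => by rw [hA k j]
      rw [Finset.sum_add_distrib, h1, Finset.sum_const, Finset.card_univ,
        Fintype.card_fin, nsmul_eq_mul] at hsum
      simp only [Δ]
      field_simp
      linarith [hsum]
    apply Finset.sum_eq_zero
    intro i _
    apply Finset.sum_eq_zero
    intro j _
    simp [E, hAeq i j]
end
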